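/- Let M be an m×n separated real matrix, i.e. no entry of M lies in the open interval (0, 1). Then q(M) ≥ p(M)·(1 − p(M))/100. -/

import Mathlib

/-!
Every entry `x` of a separated matrix satisfies `x ≤ x²`, so the mean of the squared entries is
at least the mean `p`. The variance is the mean of the squares minus `p²`, hence at least
`p - p² = p (1 - p)`; dividing by `100` only weakens this, since the variance is nonnegative.
-/

/-- The average entry `p(M)` of an `m × n` real matrix. -/
noncomputable def avgEntry {m n : ℕ} (M : Matrix (Fin m) (Fin n) ℝ) : ℝ :=
  (∑ i, ∑ j, M i j) / ((m : ℝ) * (n : ℝ))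

/-- The variance `q(M)` of the entries of an `m × n` real matrix. -/
noncomputable def varEntry {m n : ℕ} (M : Matrix (Fin m) (Fin n) ℝ) : ℝ :=
  (∑ i, ∑ j, (M i j - avgEntry M) ^ 2) / ((m : ℝ) * (n : ℝ))

open Finset
open scoped BigOperators

lemma le_sq_of_notMem_Ioo_zero_one {K : Type*} [Ring K] [LinearOrder K] [IsStrictOrderedRing K]
    {x : K} (hx : x ∉ Set.Ioo 0 1) : x ≤ x ^ 2 := by
  rw [Set.mem_Ioo, not_and_or, not_lt, not_lt] at hx
  rcases hx with hx | hx
  · exact hx.trans (sq_nonneg x)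
  · rw [sq]
    exact le_mul_of_one_le_right (zero_le_one.trans hx) hx

namespace Finset

variable {ι K : Type*} [Field K] [CharZero K]

lemma expect_sub_expect_sq {s : Finset ι} (hs : s.Nonempty) (f : ι → K) :
    𝔼 i ∈ s, (f i - 𝔼 j ∈ s, f j) ^ 2 = 𝔼 i ∈ s, f i ^ 2 - (𝔼 i ∈ s, f i) ^ 2 := by
  simp_rw [sub_sq, expect_add_distrib, expect_sub_distrib, ← expect_mul, ← mul_expect,
    expect_const hs]
  ring

variable [LinearOrder K] [IsStrictOrderedRing K]

lemma expect_mul_one_sub_expect_le_expect_sub_expect_sq (s : Finset ι) {f : ι → K}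
    (hf : ∀ i ∈ s, f i ≤ f i ^ 2) :
    (𝔼 i ∈ s, f i) * (1 - 𝔼 i ∈ s, f i) ≤ 𝔼 i ∈ s, (f i - 𝔼 j ∈ s, f j) ^ 2 := by
  obtain rfl | hs := s.eq_empty_or_nonempty
  · simp
  rw [expect_sub_expect_sq hs]
  nlinarith [expect_le_expect hf]

end Finset

lemma avgEntry_eq_expect {m n : ℕ} (M : Matrix (Fin m) (Fin n) ℝ) :
    avgEntry M = 𝔼 x : Fin m × Fin n, M x.1 x.2 := by
  rw [avgEntry, Fintype.expect_eq_sum_div_card, Fintype.sum_prod_type]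
  simp

lemma varEntry_eq_expect {m n : ℕ} (M : Matrix (Fin m) (Fin n) ℝ) :
    varEntry M = 𝔼 x : Fin m × Fin n, (M x.1 x.2 - avgEntry M) ^ 2 := by
  rw [varEntry, Fintype.expect_eq_sum_div_card, Fintype.sum_prod_type]
  simp

lemma varEntry_nonneg {m n : ℕ} (M : Matrix (Fin m) (Fin n) ℝ) : 0 ≤ varEntry M := by
  rw [varEntry_eq_expect]
  exact expect_nonneg fun _ _ ↦ sq_nonneg _

/-- **Variance bound for separated matrices.** Let `M` be an `m × n` real matrix with no
entry in the open interval `(0, 1)`. Then `q(M) ≥ p(M)·(1 − p(M))/100`. -/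
theorem separated_variance_bound (m n : ℕ) (M : Matrix (Fin m) (Fin n) ℝ)
    (hsep : ∀ i j, M i j ∉ Set.Ioo (0 : ℝ) 1) :
    avgEntry M * (1 - avgEntry M) / 100 ≤ varEntry M := by
  have h : avgEntry M * (1 - avgEntry M) ≤ varEntry M := by
    rw [varEntry_eq_expect, avgEntry_eq_expect]
    exact expect_mul_one_sub_expect_le_expect_sub_expect_sq _
      fun x _ ↦ le_sq_of_notMem_Ioo_zero_one (hsep x.1 x.2)
  linarith [varEntry_nonneg M]
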